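/- arXiv:2602.07646 — 3 statements merged into one kernel-verified Lean document; each statement's English description precedes it below -/
import Mathlib

section
/- For every ordinal α, the relation ≤_α on X × T* is transitive: if (x,U) ≤_α (y,V) and (y,V) ≤_α (z,W), then (x,U) ≤_α (z,W). -/
noncomputable section

variable {G X : Type*} [TopologicalSpace G] [Group G] [IsTopologicalGroup G]
  [TopologicalSpace X] [MulAction G X] [ContinuousSMul G X]

/-- The closure of the partial orbit `U · x`. -/
def orbCl (U : Set G) (x : X) : Set X :=
  closure ((fun g : G => g • x) '' U)

/-- Hjorth's ordinal-indexed asymmetric relations `(x,U) ≤_α (y,V)`: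
`≤₀` is inclusion of orbit closures; `(x,U) ≤_{α+1} (y,V)` iff for every nonempty open
`U' ⊆ U` there is a nonempty open `V' ⊆ V` with `(y,V') ≤_α (x,U')`; limits are
conjunctions. -/
def hle (α : Ordinal) : X → Set G → X → Set G → Prop :=
  Ordinal.limitRecOn (motive := fun _ => X → Set G → X → Set G → Prop) α
    (fun x U y V => orbCl U x ⊆ orbCl V y)
    (fun _ ih x U y V =>
      ∀ U' : Set G, IsOpen U' → U'.Nonempty → U' ⊆ U →
        ∃ V' : Set G, IsOpen V' ∧ V'.Nonempty ∧ V' ⊆ V ∧ ih y V' x U')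
    (fun _ _ ih x U y V => ∀ β hβ, ih β hβ x U y V)


section Unfolding

variable {G X : Type*} [TopologicalSpace G] [Group G] [TopologicalSpace X] [MulAction G X]
  (x y : X) (U V : Set G)

theorem hle_zero : hle 0 x U y V ↔ orbCl U x ⊆ orbCl V y := by
  rw [hle, Ordinal.limitRecOn_zero]

theorem hle_add_one (β : Ordinal) :
    hle (β + 1) x U y V ↔ ∀ U' : Set G, IsOpen U' → U'.Nonempty → U' ⊆ U →
      ∃ V' : Set G, IsOpen V' ∧ V'.Nonempty ∧ V' ⊆ V ∧ hle β y V' x U' := by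
  rw [hle, Ordinal.limitRecOn_add_one]
  rfl

theorem hle_of_isSuccLimit {o : Ordinal} (ho : Order.IsSuccLimit o) :
    hle o x U y V ↔ ∀ β < o, hle β x U y V := by
  rw [hle, Ordinal.limitRecOn_limit _ _ _ _ ho]
  rfl

end Unfolding

theorem hle_trans_general (α : Ordinal) (x y z : X) (U V W : Set G)
    (h₁ : hle α x U y V) (h₂ : hle α y V z W) :
    hle α x U z W := by
  induction α using Ordinal.limitRecOn generalizing x y z U V W with
  | zero =>
    rw [hle_zero] at *
    exact h₁.trans h₂
  | add_one β ih =>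
    rw [hle_add_one] at *
    intro U' hU' hU'ne hU'U
    obtain ⟨V', hV', hV'ne, hV'V, hyx⟩ := h₁ U' hU' hU'ne hU'U
    obtain ⟨W', hW', hW'ne, hW'W, hzy⟩ := h₂ V' hV' hV'ne hV'V
    -- the inner relations point backwards, so the induction hypothesis chains `z ≤ y ≤ x`
    exact ⟨W', hW', hW'ne, hW'W, ih z y x W' V' U' hzy hyx⟩
  | limit β hβ ih =>
    rw [hle_of_isSuccLimit _ _ _ _ hβ] at h₁ h₂ ⊢
    exact fun γ hγ => ih γ hγ x y z U V W (h₁ γ hγ) (h₂ γ hγ)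

/-- For every ordinal `α` the relation `≤_α` on `X × T*` is transitive. -/
theorem hle_trans (α : Ordinal) (x y z : X) (U V W : Set G)
    (hU : IsOpen U) (hU' : U.Nonempty) (hV : IsOpen V) (hV' : V.Nonempty)
    (hW : IsOpen W) (hW' : W.Nonempty)
    (h₁ : hle α x U y V) (h₂ : hle α y V z W) :
    hle α x U z W :=
  hle_trans_general α x y z U V W h₁ h₂

end
end

section
/- For a limit ordinal λ, player II has a winning strategy in the game G^s(x,U,y,V,λ) if and only if player II has a winning strategy in G^s(x,U,y,V,β) for every ordinal β with 0 < β < λ. -/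
noncomputable section

variable {G X : Type*} [TopologicalSpace G] [Group G] [IsTopologicalGroup G]
  [TopologicalSpace X] [MulAction G X] [ContinuousSMul G X]

/-- The state of the game `𝒢ˢ(x,U,y,V,α)` before a round: `z` records the side
(`true` for `x`, `false` for `y`) of the previous round (`z₋₁ = x`), `A` and `B`
the previous open sets `A_{i-1}`, `B_{i-1}`, and `o` the previous ordinal `α_{i-1}`. -/
structure SState (G : Type u_1) where
  z : Bool
  A : Set G
  B : Set G
  o : Ordinal.{u_2}

/-- A move of player I in `𝒢ˢ`: a triple `(zᵢ, Aᵢ, αᵢ)`. -/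
abbrev SMove (G : Type*) := Bool × Set G × Ordinal

/-- Interpretation of the side marker: `true ↦ x`, `false ↦ y`. -/
def pt (x y : X) (b : Bool) : X := if b then x else y

/-- Legality of player I's move `(zᵢ, Aᵢ, αᵢ)` at state `s`. -/
def slegalI (s : SState G) (m : SMove G) : Prop :=
  m.2.2 < s.o ∧ IsOpen m.2.1 ∧ m.2.1.Nonempty ∧
    (if m.1 = s.z then m.2.1 ⊆ s.A else m.2.1 ⊆ s.B)

/-- Legality of player II's response `B'` to the move `m` at state `s`. -/
def slegalII (x y : X) (s : SState G) (m : SMove G) (B' : Set G) : Prop :=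
  IsOpen B' ∧ B'.Nonempty ∧
    (if m.1 = s.z then B' ⊆ s.B else B' ⊆ s.A) ∧
    orbCl B' (pt x y (!m.1)) = orbCl m.2.1 (pt x y m.1)

/-- The state after a round. -/
def sStep (s : SState G) (m : SMove G) (B' : Set G) : SState G :=
  ⟨m.1, m.2.1, B', m.2.2⟩

/-- The state reached after player I has played the (newest-first) history `h`
and player II has followed the strategy `σ`. -/
def sStateAfter (U V : Set G) (α : Ordinal) (σ : List (SMove G) → Set G) :
    List (SMove G) → SState G
  | [] => ⟨true, U, V, α⟩
  | m :: h => sStep (sStateAfter U V α σ h) m (σ (m :: h))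

/-- All of player I's moves in the (newest-first) history were legal. -/
def sLegalHist (U V : Set G) (α : Ordinal) (σ : List (SMove G) → Set G) :
    List (SMove G) → Prop
  | [] => True
  | m :: h => sLegalHist U V α σ h ∧ slegalI (sStateAfter U V α σ h) m

/-- `σ` is a winning strategy for player II in `𝒢ˢ(x,U,y,V,α)`: against any legal
play of player I, every response of `σ` is legal (the game terminates with player I
unable to move, since the ordinals strictly decrease). -/
def sWinning (x y : X) (U V : Set G) (α : Ordinal)
    (σ : List (SMove G) → Set G) : Prop :=
  ∀ (m : SMove G) (h : List (SMove G)), sLegalHist U V α σ (m :: h) →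
    slegalII x y (sStateAfter U V α σ h) m (σ (m :: h))


/- Only player I's first move is compared with the initial ordinal, so a strategy winning
`𝒢ˢ(x,U,y,V,α)` also wins every `𝒢ˢ(x,U,y,V,β)` with `β ≤ α`. Conversely, player II glues
strategies for the games `𝒢ˢ(x,U,y,V,β+1)`, `β < α`, by following the one indexed by player I's
first ordinal `α₀`: a legal play of `𝒢ˢ(x,U,y,V,α)` opening with `α₀` is also a legal play of
`𝒢ˢ(x,U,y,V,α₀+1)`. At a limit `α` these games are all available, as `β + 1 < α`. -/

section

variable {U V : Set G} {α β : Ordinal} {σ τ : List (SMove G) → Set G}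

lemma sStateAfter_cons (m : SMove G) (h : List (SMove G)) :
    sStateAfter U V α σ (m :: h) = ⟨m.1, m.2.1, σ (m :: h), m.2.2⟩ := rfl

lemma sLegalHist.getLast_lt {l : List (SMove G)} (hl : sLegalHist U V α σ l) (hne : l ≠ []) :
    (l.getLast hne).2.2 < α := by
  induction l with
  | nil => exact absurd rfl hne
  | cons m h ih =>
    cases h with
    | nil => exact hl.2.1
    | cons m' t => exact ih hl.1 (List.cons_ne_nil _ _)

lemma sLegalHist_congr {l : List (SMove G)}
    (hagree : ∀ l', l' <:+ l → l' ≠ [] → σ l' = τ l')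
    (hord : ∀ hne : l ≠ [], (l.getLast hne).2.2 < α → (l.getLast hne).2.2 < β)
    (hl : sLegalHist U V α σ l) : sLegalHist U V β τ l := by
  induction l with
  | nil => trivial
  | cons m h ih =>
    have hagree' : ∀ l', l' <:+ h → l' ≠ [] → σ l' = τ l' :=
      fun l' hsuf => hagree l' (hsuf.trans (List.suffix_cons m h))
    have hord' : ∀ hne : h ≠ [], (h.getLast hne).2.2 < α → (h.getLast hne).2.2 < β :=
      fun hne => by simpa only [List.getLast_cons hne] using hord (List.cons_ne_nil m h)
    refine ⟨ih hagree' hord' hl.1, ?_⟩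
    cases h with
    | nil => exact ⟨hord (List.cons_ne_nil m []) hl.2.1, hl.2.2⟩
    | cons m' t =>
      rw [sStateAfter_cons, ← hagree _ (List.suffix_cons m _) (List.cons_ne_nil _ _)]
      exact hl.2

lemma slegalII_sStateAfter_congr (x y : X) (h : List (SMove G)) (hagree : h ≠ [] → σ h = τ h)
    (m : SMove G) (B : Set G) :
    slegalII x y (sStateAfter U V α σ h) m B ↔ slegalII x y (sStateAfter U V β τ h) m B := by
  cases h with
  | nil => rfl
  | cons m' t => rw [sStateAfter_cons, sStateAfter_cons, hagree (List.cons_ne_nil _ _)]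

lemma sWinning.mono {x y : X} (hσ : sWinning x y U V α σ) (hβα : β ≤ α) :
    sWinning x y U V β σ := fun m h hl =>
  (slegalII_sStateAfter_congr x y h (fun _ => rfl) m _).1 <|
    hσ m h (sLegalHist_congr (fun _ _ _ => rfl) (fun _ hlt => hlt.trans_le hβα) hl)

def sGlue (F : Ordinal → List (SMove G) → Set G) (l : List (SMove G)) : Set G :=
  if hl : l = [] then ∅ else F (l.getLast hl).2.2 l

lemma sWinning_sGlue {x y : X} {F : Ordinal → List (SMove G) → Set G}
    (hF : ∀ β < α, sWinning x y U V (Order.succ β) (F β)) : sWinning x y U V α (sGlue F) := by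
  intro m h hl
  set α₀ := ((m :: h).getLast (List.cons_ne_nil m h)).2.2
  have hagree : ∀ l', l' <:+ m :: h → l' ≠ [] → sGlue F l' = F α₀ l' := fun l' hsuf hne => by
    rw [sGlue, dif_neg hne, hsuf.getLast hne]
  have hlF : sLegalHist U V (Order.succ α₀) (F α₀) (m :: h) :=
    sLegalHist_congr hagree (fun _ _ => Order.lt_succ α₀) hl
  rw [hagree _ List.suffix_rfl (List.cons_ne_nil m h)]
  exact (slegalII_sStateAfter_congr x y h (hagree h (List.suffix_cons m h)) m _).2 <|
    hF α₀ (hl.getLast_lt _) m h hlF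

end

theorem sWinning_limit_general (x y : X) (U V : Set G)
    (α : Ordinal) (hα : Order.IsSuccLimit α) :
    (∃ σ : List (SMove G) → Set G, sWinning x y U V α σ) ↔
      (∀ β : Ordinal, 0 < β → β < α →
        ∃ σ : List (SMove G) → Set G, sWinning x y U V β σ) := by
  constructor
  · rintro ⟨σ, hσ⟩ β - hβα
    exact ⟨σ, hσ.mono hβα.le⟩
  · intro H
    choose! F hF using fun β (hβ : β < α) =>
      H (Order.succ β) (Order.bot_lt_succ β) (hα.succ_lt hβ)
    exact ⟨sGlue F, sWinning_sGlue hF⟩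

/-- For a limit ordinal `α`, player II has a winning strategy in `𝒢ˢ(x,U,y,V,α)`
iff player II has a winning strategy in `𝒢ˢ(x,U,y,V,β)` for every `0 < β < α`. -/
theorem sWinning_limit (x y : X) (U V : Set G)
    (hU : IsOpen U) (hUne : U.Nonempty) (hV : IsOpen V) (hVne : V.Nonempty)
    (α : Ordinal) (hα : Order.IsSuccLimit α) :
    (∃ σ : List (SMove G) → Set G, sWinning x y U V α σ) ↔
      (∀ β : Ordinal, 0 < β → β < α →
        ∃ σ : List (SMove G) → Set G, sWinning x y U V β σ) :=
  sWinning_limit_general x y U V α hα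

end
end

section
/- For all L-structures M, N, tuples a from M and b from N of equal length, and all ordinals α: H^α_{M,a} = H^α_{N,b} if and only if (M,a) ∼_α (N,b), where ∼_α is the standard back-and-forth hierarchy. -/
noncomputable section

open scoped Classical

/-- A (single-sorted, finitary) signature: function, relation and constant symbols. -/
structure Sig : Type 1 where
  Func : ℕ → Type
  Rel : ℕ → Type
  Const : Type

/-- A `σ`-structure on a carrier `M`: interpretations of all symbols. -/
structure Str (σ : Sig) (M : Type) : Type where
  fn : ∀ {k : ℕ}, σ.Func k → (Fin k → M) → M
  rel : ∀ {k : ℕ}, σ.Rel k → (Fin k → M) → Prop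
  cst : σ.Const → M

/-- The record of truth values of all unnested atomic formulas under all assignments
of their (finitely many) variables into an `n`-tuple: the components record the truth
values of the unnested atomic formulas `vᵢ = vⱼ`, `vᵢ = c`, `R(v̄)` and `f(v̄) = vᵢ`. -/
structure UAInv (σ : Sig) (n : ℕ) : Type where
  eqv : Fin n → Fin n → Prop
  cst : σ.Const → Fin n → Prop
  rel : ∀ k : ℕ, σ.Rel k → (Fin k → Fin n) → Prop
  fnc : ∀ k : ℕ, σ.Func k → (Fin k → Fin n) → Fin n → Prop

/-- `I_{M,ā}`: the truth values in `M` of all unnested atomic formulas with variables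
interpreted by entries of the tuple `ā`. -/
def uaInv {σ : Sig} {M : Type} (I : Str σ M) {n : ℕ} (a : Fin n → M) : UAInv σ n where
  eqv i j := a i = a j
  cst c i := a i = I.cst c
  rel _ R g := I.rel R (fun i => a (g i))
  fnc _ f g i := I.fn f (fun j => a (g j)) = a i

/-- The back-and-forth hierarchy `(M,ā) ∼_α (N,b̄)` (for the qualifying pair
`(μ,λ) = (ω,ω)`: finite tuples, extensions by finite tuples): `∼₀` means the map
`ā ↦ b̄` is a partial isomorphism (the two tuples satisfy the same unnested atomic
formulas); `(M,ā) ∼_{α+1} (N,b̄)` iff every finite tuple extension on either side can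
be matched on the other side preserving `∼_α`; limits are conjunctions. -/
def Sim {σ : Sig} {M N : Type} (IM : Str σ M) (IN : Str σ N) (α : Ordinal) :
    ∀ n : ℕ, (Fin n → M) → (Fin n → N) → Prop :=
  Ordinal.limitRecOn (motive := fun _ => ∀ n : ℕ, (Fin n → M) → (Fin n → N) → Prop) α
    (fun _ a b => uaInv IM a = uaInv IN b)
    (fun _ ih n a b =>
      (∀ (m : ℕ) (c : Fin m → M), ∃ d : Fin m → N,
        ih (n + m) (Fin.append a c) (Fin.append b d)) ∧
      (∀ (m : ℕ) (d : Fin m → N), ∃ c : Fin m → M,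
        ih (n + m) (Fin.append a c) (Fin.append b d)))
    (fun _ _ ih n a b => ∀ β hβ, ih β hβ n a b)

/-- A point of the domain of the invariant functions `H^α_{M,ā}` (besides the
`I_{M,ā}` part): a structure `K` together with a tuple `s̄t̄` of length `n + m`
(`s̄` of the length `n` of `ā` and `t̄` of finite length `m`). -/
structure HKey (σ : Sig) (n : ℕ) : Type 1 where
  K : Type
  IK : Str σ K
  m : ℕ
  st : Fin (n + m) → K

/-- The invariant functions `H^α_{M,ā}`, represented as the pair consisting of
`I_{M,ā}` together with the map sending `((K, s̄t̄), β)` with `β < α` to the value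
(`some true`/`some false` for `1`/`0`) of `H^α_{M,ā}(K, s̄t̄, β)`, and `none` outside
the domain.  `H^{β+1}_{M,ā}(K, s̄t̄, β) = 1` iff there is a tuple `c̄` in `M` of the
length of `t̄` with `H^β_{M,āc̄} = H^β_{K,s̄t̄}`; the restriction property
`H^α_{M,ā} ↾ β = H^β_{M,ā}` holds by construction. -/
noncomputable def Hfun {σ : Sig} (α : Ordinal) {M : Type} (IM : Str σ M) {n : ℕ}
    (a : Fin n → M) : UAInv σ n × (HKey σ n × Ordinal → Option Bool) :=
  ⟨uaInv IM a,
    fun q =>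
      if h : q.2 < α then
        some (if (∃ c : Fin q.1.m → M,
            Hfun q.2 IM (Fin.append a c) = Hfun q.2 q.1.IK q.1.st) then true else false)
      else none⟩
termination_by α
decreasing_by all_goals exact h

/-! Induction on `α`, with `Hfun` unfolded once. At a successor level `β + 1`, equality of
the invariants says that every finite extension of one tuple has a partner extension of the
other with equal `β`-invariants: test the `β + 1` entry at the point `(M, āc̄)` (resp.
`(N, b̄d̄)`) itself; conversely such partners give equal `γ`-invariants for all `γ ≤ β`, which
is all the `β + 1` entries ask for. At a limit level both sides are conjunctions over smaller
levels, the `H` side because the entry at `γ` is already recorded at level `γ + 1 < α`. -/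

namespace UAInv

variable {σ : Sig} {n p : ℕ}

def comap (f : Fin n → Fin p) (J : UAInv σ p) : UAInv σ n where
  eqv i j := J.eqv (f i) (f j)
  cst c i := J.cst c (f i)
  rel k R g := J.rel k R (f ∘ g)
  fnc k F g i := J.fnc k F (f ∘ g) (f i)

end UAInv

section Invariants

variable {σ : Sig} {M N : Type} {IM : Str σ M} {IN : Str σ N}

theorem uaInv_comp (I : Str σ M) {n p : ℕ} (a : Fin p → M) (f : Fin n → Fin p) :
    uaInv I (a ∘ f) = (uaInv I a).comap f :=
  rfl

theorem uaInv_eq_of_append {n m : ℕ} {a : Fin n → M} {b : Fin n → N} {c : Fin m → M}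
    {d : Fin m → N} (h : uaInv IM (Fin.append a c) = uaInv IN (Fin.append b d)) :
    uaInv IM a = uaInv IN b := by
  have hrestrict {X : Type} (x : Fin n → X) (y : Fin m → X) :
      Fin.append x y ∘ Fin.castAdd m = x :=
    funext (Fin.append_left x y)
  rw [← hrestrict a c, ← hrestrict b d, uaInv_comp, uaInv_comp, h]

theorem Hfun_eq_Hfun_iff {α : Ordinal} {n : ℕ} {a : Fin n → M} {b : Fin n → N} :
    Hfun α IM a = Hfun α IN b ↔
      uaInv IM a = uaInv IN b ∧
      ∀ β < α, ∀ (K : Type) (IK : Str σ K) (m : ℕ) (st : Fin (n + m) → K),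
        (∃ c : Fin m → M, Hfun β IM (Fin.append a c) = Hfun β IK st) ↔
          ∃ d : Fin m → N, Hfun β IN (Fin.append b d) = Hfun β IK st := by
  rw [Hfun, Hfun]
  simp only [Prod.mk.injEq, funext_iff, Prod.forall]
  refine and_congr_right fun _ => ⟨fun h β hβ K IK m st => ?_, fun h ⟨K, IK, m, st⟩ β => ?_⟩
  · simpa [hβ] using h ⟨K, IK, m, st⟩ β
  · by_cases hβ : β < α
    · simpa [hβ] using h β hβ K IK m st
    · simp [hβ]

theorem uaInv_eq_of_Hfun_eq {α : Ordinal} {n : ℕ} {a : Fin n → M} {b : Fin n → N}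
    (h : Hfun α IM a = Hfun α IN b) : uaInv IM a = uaInv IN b :=
  (Hfun_eq_Hfun_iff.1 h).1

theorem Hfun_eq_Hfun_of_le {α β : Ordinal} (hβα : β ≤ α) {n : ℕ} {a : Fin n → M}
    {b : Fin n → N} (h : Hfun α IM a = Hfun α IN b) : Hfun β IM a = Hfun β IN b := by
  rw [Hfun_eq_Hfun_iff] at h ⊢
  exact ⟨h.1, fun γ hγ => h.2 γ (hγ.trans_le hβα)⟩

theorem Hfun_zero_eq_Hfun_zero_iff {n : ℕ} {a : Fin n → M} {b : Fin n → N} :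
    Hfun 0 IM a = Hfun 0 IN b ↔ uaInv IM a = uaInv IN b := by
  rw [Hfun_eq_Hfun_iff]
  exact ⟨And.left, fun h => ⟨h, fun _ hβ => (not_lt_zero hβ).elim⟩⟩

theorem Hfun_add_one_eq_Hfun_add_one_iff {β : Ordinal} {n : ℕ} {a : Fin n → M}
    {b : Fin n → N} :
    Hfun (β + 1) IM a = Hfun (β + 1) IN b ↔
      (∀ (m : ℕ) (c : Fin m → M), ∃ d : Fin m → N,
        Hfun β IM (Fin.append a c) = Hfun β IN (Fin.append b d)) ∧
      (∀ (m : ℕ) (d : Fin m → N), ∃ c : Fin m → M,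
        Hfun β IM (Fin.append a c) = Hfun β IN (Fin.append b d)) := by
  rw [Hfun_eq_Hfun_iff]
  constructor
  · rintro ⟨-, h⟩
    have hβ : β < β + 1 := lt_add_one β
    refine ⟨fun m c => ?_, fun m d => ?_⟩
    · obtain ⟨d, hd⟩ := (h β hβ M IM m (Fin.append a c)).1 ⟨c, rfl⟩
      exact ⟨d, hd.symm⟩
    · exact (h β hβ N IN m (Fin.append b d)).2 ⟨d, rfl⟩
  · rintro ⟨forth, back⟩
    refine ⟨?_, fun γ hγ K IK m st => ⟨?_, ?_⟩⟩
    · obtain ⟨d, hd⟩ := forth 0 Fin.elim0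
      exact uaInv_eq_of_append (uaInv_eq_of_Hfun_eq hd)
    · rintro ⟨c, hc⟩
      obtain ⟨d, hd⟩ := forth m c
      exact ⟨d, (Hfun_eq_Hfun_of_le (Order.lt_add_one_iff.1 hγ) hd).symm.trans hc⟩
    · rintro ⟨d, hd⟩
      obtain ⟨c, hc⟩ := back m d
      exact ⟨c, (Hfun_eq_Hfun_of_le (Order.lt_add_one_iff.1 hγ) hc).trans hd⟩

theorem Hfun_eq_Hfun_iff_of_isSuccLimit {α : Ordinal} (hα : Order.IsSuccLimit α) {n : ℕ}
    {a : Fin n → M} {b : Fin n → N} :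
    Hfun α IM a = Hfun α IN b ↔ ∀ β < α, Hfun β IM a = Hfun β IN b := by
  refine ⟨fun h β hβ => Hfun_eq_Hfun_of_le hβ.le h, fun h => Hfun_eq_Hfun_iff.2 ⟨?_, ?_⟩⟩
  · exact uaInv_eq_of_Hfun_eq (h 0 hα.bot_lt)
  · intro β hβ
    exact (Hfun_eq_Hfun_iff.1 (h _ (hα.succ_lt hβ))).2 β (Order.lt_succ β)

end Invariants

section BackAndForth

variable {σ : Sig} {M N : Type} (IM : Str σ M) (IN : Str σ N) {n : ℕ} (a : Fin n → M)
  (b : Fin n → N)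

theorem Sim_zero : Sim IM IN 0 n a b ↔ uaInv IM a = uaInv IN b := by
  rw [Sim, Ordinal.limitRecOn_zero]

theorem Sim_add_one (β : Ordinal) :
    Sim IM IN (β + 1) n a b ↔
      (∀ (m : ℕ) (c : Fin m → M), ∃ d : Fin m → N,
        Sim IM IN β (n + m) (Fin.append a c) (Fin.append b d)) ∧
      (∀ (m : ℕ) (d : Fin m → N), ∃ c : Fin m → M,
        Sim IM IN β (n + m) (Fin.append a c) (Fin.append b d)) := by
  rw [Sim, Ordinal.limitRecOn_add_one]
  rfl

theorem Sim_of_isSuccLimit {α : Ordinal} (hα : Order.IsSuccLimit α) :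
    Sim IM IN α n a b ↔ ∀ β < α, Sim IM IN β n a b := by
  rw [Sim, Ordinal.limitRecOn_limit _ _ _ _ hα]
  rfl

end BackAndForth

/-- For all `σ`-structures `M, N`, tuples `ā`, `b̄` of equal length and all ordinals
`α`: `H^α_{M,ā} = H^α_{N,b̄}` iff `(M,ā) ∼_α (N,b̄)`. -/
theorem Hfun_eq_iff_Sim {σ : Sig} {M N : Type} (IM : Str σ M) (IN : Str σ N)
    (α : Ordinal) (n : ℕ) (a : Fin n → M) (b : Fin n → N) :
    Hfun α IM a = Hfun α IN b ↔ Sim IM IN α n a b := by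
  induction α using Ordinal.limitRecOn generalizing n with
  | zero => rw [Hfun_zero_eq_Hfun_zero_iff, Sim_zero]
  | add_one β ih => simp only [Hfun_add_one_eq_Hfun_add_one_iff, Sim_add_one, ih]
  | limit α hα ih =>
    rw [Hfun_eq_Hfun_iff_of_isSuccLimit hα, Sim_of_isSuccLimit IM IN a b hα]
    exact forall₂_congr fun β hβ => ih β hβ n a b

end
end
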